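/- Let (Σ, μ) be a measure space, σ : Σ → ℝ a measurable function with σ(z) > 0 for all z, g ∈ ℝ a constant, and let H, L : ℝ² × Σ → ℝ and φ : ℝ² × Σ → ℂ be functions such that for every z ∈ Σ the maps t ↦ H(t,z), t ↦ L(t,z), t ↦ φ(t,z) are twice continuously differentiable with H(t,z)·L(t,z) = |φ(t,z)|²/σ(z)², L(t,z) ≥ 0, φ(0,z) = 0, H(0,z) = 1; suppose moreover that H, L and their first and second t-partial derivatives are dominated, uniformly for t in a neighborhood of 0, by μ-integrable functions of z (so that differentiation under the integral sign is valid), and that ∫_Σ (H(t,z) − L(t,z))·σ(z) dμ(z) = g for all t near 0. Define E(t) = ∫_Σ (H(t,z) + L(t,z))·σ(z) dμ(z). Then E(t) = g + 2∫_Σ L(t,z)σ(z) dμ(z) ≥ g = E(0) for all t near 0, both first partial derivatives of E vanish at t = 0, and for all i, j ∈ {1,2}: ∂²E/∂tᵢ∂tⱼ(0) = 4 ∫_Σ Re(∂φ/∂tᵢ(0,z) · conj(∂φ/∂tⱼ(0,z))) / σ(z) dμ(z). -/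

import Mathlib

/-!
Since `H(0) = 1` and `φ(0) = 0`, the identity `H·L = |φ|²/σ²` forces `L(0) = 0`; as `L ≥ 0`,
every `L(·, z)` has a minimum at `t = 0`, so its first derivative vanishes there and, differentiating
`H·L = |φ|²/σ²` twice at `0`, `∂ᵢ∂ⱼL(0) = 2 Re(∂ᵢφ · conj ∂ⱼφ)(0)/σ²`.
Constancy of the Jacobian integral gives `E = g + 2∫Lσ ≥ g` near `0`, with equality at `0`;
so `0` is a minimum of `E`, and the second variation of `E` is twice that of `∫Lσ`, which is
computed by differentiating twice under the integral sign.
-/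

open MeasureTheory Filter Topology

theorem mul_le_of_add_mul_le {a b c d : ℝ} (ha : 0 ≤ a) (hc : 0 ≤ c) (h : (a + b) * c ≤ d) :
    b * c ≤ d := by
  nlinarith

section SecondDerivative

variable {E : Type*} [NormedAddCommGroup E] [NormedSpace ℝ E]
  {G : Type*} [NormedAddCommGroup G] [NormedSpace ℝ G]

theorem ContDiff.hasFDerivAt_fderiv {f : E → G} (hf : ContDiff ℝ 2 f) (x : E) :
    HasFDerivAt (fderiv ℝ f) (fderiv ℝ (fderiv ℝ f) x) x :=
  ((hf.fderiv_right (m := 1) le_rfl).differentiable one_ne_zero x).hasFDerivAt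

theorem norm_fderiv_fderiv {f : E → G} (x : E) :
    ‖fderiv ℝ (fderiv ℝ f) x‖ = ‖iteratedFDeriv ℝ 2 f x‖ := by
  rw [← norm_iteratedFDeriv_one, norm_iteratedFDeriv_fderiv]

theorem fderiv_fderiv_mul_apply {f g : E → ℝ} (hf : ContDiff ℝ 2 f) (hg : ContDiff ℝ 2 g)
    (x u v : E) :
    fderiv ℝ (fderiv ℝ (fun t => f t * g t)) x u v =
      f x * fderiv ℝ (fderiv ℝ g) x u v + fderiv ℝ f x u * fderiv ℝ g x v +
      fderiv ℝ g x u * fderiv ℝ f x v + g x * fderiv ℝ (fderiv ℝ f) x u v := by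
  have hf₁ := hf.differentiable two_ne_zero
  have hg₁ := hg.differentiable two_ne_zero
  have hD : fderiv ℝ (fun t => f t * g t) = fun t => f t • fderiv ℝ g t + g t • fderiv ℝ f t :=
    funext fun t => fderiv_mul (hf₁ t) (hg₁ t)
  have hD₂ : HasFDerivAt (fun t => f t • fderiv ℝ g t + g t • fderiv ℝ f t) _ x :=
    ((hf₁ x).hasFDerivAt.smul (hg.hasFDerivAt_fderiv x)).add
      ((hg₁ x).hasFDerivAt.smul (hf.hasFDerivAt_fderiv x))
  rw [hD, hD₂.fderiv]
  simp only [add_apply, smul_apply, ContinuousLinearMap.smulRight_apply, smul_eq_mul]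
  ring

theorem fderiv_fderiv_add_apply {f g : E → ℝ} (hf : ContDiff ℝ 2 f) (hg : ContDiff ℝ 2 g)
    (x u v : E) :
    fderiv ℝ (fderiv ℝ (fun t => f t + g t)) x u v =
      fderiv ℝ (fderiv ℝ f) x u v + fderiv ℝ (fderiv ℝ g) x u v := by
  have hD : fderiv ℝ (fun t => f t + g t) = fun t => fderiv ℝ f t + fderiv ℝ g t :=
    funext fun t => fderiv_add (hf.differentiable two_ne_zero t) (hg.differentiable two_ne_zero t)
  have hD₂ : HasFDerivAt (fun t => fderiv ℝ f t + fderiv ℝ g t) _ x :=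
    (hf.hasFDerivAt_fderiv x).add (hg.hasFDerivAt_fderiv x)
  rw [hD, hD₂.fderiv]
  rfl

theorem fderiv_fderiv_sq_norm_apply_of_eq_zero {p : E → ℂ} (hp : ContDiff ℝ 2 p) {x : E}
    (hpx : p x = 0) (u v : E) :
    fderiv ℝ (fderiv ℝ (fun t => ‖p t‖ ^ 2)) x u v =
      2 * (fderiv ℝ p x v * (starRingEnd ℂ) (fderiv ℝ p x u)).re := by
  have hp₁ := (hp.differentiable two_ne_zero x).hasFDerivAt
  have ha : ContDiff ℝ 2 (fun t => (p t).re) := Complex.reCLM.contDiff.comp hp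
  have hb : ContDiff ℝ 2 (fun t => (p t).im) := Complex.imCLM.contDiff.comp hp
  have hsq : (fun t => ‖p t‖ ^ 2) = fun t => (p t).re * (p t).re + (p t).im * (p t).im :=
    funext fun t => by rw [Complex.sq_norm, Complex.normSq_apply]
  have hDa : fderiv ℝ (fun t => (p t).re) x = Complex.reCLM.comp (fderiv ℝ p x) :=
    (Complex.reCLM.hasFDerivAt.comp x hp₁).fderiv
  have hDb : fderiv ℝ (fun t => (p t).im) x = Complex.imCLM.comp (fderiv ℝ p x) :=
    (Complex.imCLM.hasFDerivAt.comp x hp₁).fderiv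
  rw [hsq, fderiv_fderiv_add_apply (ha.mul ha) (hb.mul hb), fderiv_fderiv_mul_apply ha ha,
    fderiv_fderiv_mul_apply hb hb, hDa, hDb]
  simp only [hpx, Complex.zero_re, Complex.zero_im, zero_mul, add_zero, zero_add,
    ContinuousLinearMap.comp_apply, Complex.reCLM_apply, Complex.imCLM_apply, Complex.mul_re,
    Complex.conj_re, Complex.conj_im]
  ring

theorem fderiv_fderiv_apply_of_mul_eq_sq_norm_div {f l : E → ℝ} {p : E → ℂ} {c : ℝ}
    (hf : ContDiff ℝ 2 f) (hl : ContDiff ℝ 2 l) (hp : ContDiff ℝ 2 p)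
    (hflp : ∀ t, f t * l t = ‖p t‖ ^ 2 / c ^ 2) (hl_nonneg : ∀ t, 0 ≤ l t) {x : E}
    (hpx : p x = 0) (hfx : f x = 1) (u v : E) :
    fderiv ℝ (fderiv ℝ l) x u v =
      2 * (fderiv ℝ p x v * (starRingEnd ℂ) (fderiv ℝ p x u)).re / c ^ 2 := by
  have hlx : l x = 0 := by simpa [hpx, hfx] using hflp x
  have hDlx : fderiv ℝ l x = 0 :=
    IsLocalMin.fderiv_eq_zero (Eventually.of_forall fun t => hlx ▸ hl_nonneg t)
  have hfl : (fun t => f t * l t) = fun t => (c ^ 2)⁻¹ * ‖p t‖ ^ 2 :=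
    funext fun t => by rw [hflp t, div_eq_inv_mul]
  have key := fderiv_fderiv_mul_apply hf hl x u v
  rw [hfl, fderiv_fderiv_mul_apply contDiff_const (hp.norm_sq ℝ),
    fderiv_fderiv_sq_norm_apply_of_eq_zero hp hpx] at key
  simpa [hlx, hDlx, hfx, div_eq_inv_mul, mul_comm, mul_left_comm] using key.symm

theorem fderiv_fderiv_apply_of_eventuallyEq_const_add_smul {F Φ : E → G} {x : E} {g : G}
    {c : ℝ} (hF : F =ᶠ[𝓝 x] fun t => g + c • Φ t) (v w : E) :
    fderiv ℝ (fun t => fderiv ℝ F t v) x w = c • fderiv ℝ (fun t => fderiv ℝ Φ t v) x w := by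
  have hD : (fun t => fderiv ℝ F t v) =ᶠ[𝓝 x] c • fun t => fderiv ℝ Φ t v :=
    (hF.fderiv (𝕜 := ℝ)).mono fun t ht => by
      simp only [Pi.smul_apply]
      rw [ht, fderiv_const_add, show (fun t => c • Φ t) = c • Φ from rfl,
        fderiv_const_smul_field]
      rfl
  rw [hD.fderiv_eq, fderiv_const_smul_field]
  rfl

end SecondDerivative

section ParametricIntegral

variable {Ω : Type*} [MeasurableSpace Ω] {μ : Measure Ω}
  {E : Type*} [NormedAddCommGroup E] [NormedSpace ℝ E]
  {G : Type*} [NormedAddCommGroup G] [NormedSpace ℝ G]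

theorem ContinuousLinearMap.aestronglyMeasurable_of_forall_apply [FiniteDimensional ℝ E]
    {f : Ω → E →L[ℝ] G} (hf : ∀ v, AEStronglyMeasurable (fun z => f z v) μ) :
    AEStronglyMeasurable f μ := by
  let b := Module.finBasis ℝ E
  have hsum : f = fun z => ∑ i, ContinuousLinearMap.smulRightL ℝ E G
      (LinearMap.toContinuousLinearMap (b.coord i)) (f z (b i)) := by
    ext z x
    nth_rewrite 1 [← b.sum_repr x]
    simp only [map_sum, map_smul]
    simp
  rw [hsum]
  exact Finset.aestronglyMeasurable_fun_sum _ fun i _ =>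
    (ContinuousLinearMap.continuous _).comp_aestronglyMeasurable (hf (b i))

theorem aestronglyMeasurable_fderiv_apply {F : E → Ω → G} {x : E}
    (hF : ∀ t, AEStronglyMeasurable (F t) μ) (hd : ∀ z, DifferentiableAt ℝ (F · z) x) (v : E) :
    AEStronglyMeasurable (fun z => fderiv ℝ (F · z) x v) μ :=
  aestronglyMeasurable_of_tendsto_ae atTop
    (f := fun (n : ℕ) z => (n : ℝ) • (F (x + (n : ℝ)⁻¹ • v) z - F x z))
    (fun _ => ((hF _).sub (hF x)).const_smul _)
    (ae_of_all _ fun z => ((hd z).hasFDerivAt.lim_real v).comp tendsto_natCast_atTop_atTop)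

theorem aestronglyMeasurable_fderiv [FiniteDimensional ℝ E] {F : E → Ω → G} {x : E}
    (hF : ∀ t, AEStronglyMeasurable (F t) μ) (hd : ∀ z, DifferentiableAt ℝ (F · z) x) :
    AEStronglyMeasurable (fun z => fderiv ℝ (F · z) x) μ :=
  ContinuousLinearMap.aestronglyMeasurable_of_forall_apply (aestronglyMeasurable_fderiv_apply hF hd)

variable {σ : Ω → ℝ}

theorem integrable_smul_of_norm_mul_le (hσ : AEStronglyMeasurable σ μ) (hσ0 : ∀ z, 0 ≤ σ z)
    {f : Ω → G} (hf : AEStronglyMeasurable f μ) {B : Ω → ℝ} (hB : Integrable B μ)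
    (hfB : ∀ z, ‖f z‖ * σ z ≤ B z) : Integrable (fun z => σ z • f z) μ :=
  hB.mono' (hσ.smul hf) (ae_of_all _ fun z => by
    rw [norm_smul, Real.norm_of_nonneg (hσ0 z), mul_comm]
    exact hfB z)

theorem integral_add_mul_eq_add_two_mul {h l : Ω → ℝ} {g : ℝ}
    (hh : Integrable (fun z => h z * σ z) μ) (hl : Integrable (fun z => l z * σ z) μ)
    (hhl : ∫ z, (h z - l z) * σ z ∂μ = g) :
    ∫ z, (h z + l z) * σ z ∂μ = g + 2 * ∫ z, l z * σ z ∂μ := by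
  simp only [add_mul, sub_mul] at hhl ⊢
  rw [integral_add hh hl, ← hhl, integral_sub hh hl]
  ring

theorem hasFDerivAt_integral_smul_of_dominated (hσ : AEStronglyMeasurable σ μ)
    (hσ0 : ∀ z, 0 ≤ σ z) {f : E → Ω → G} {x : E} {s : Set E} (hs : s ∈ 𝓝 x)
    (hf_meas : ∀ t, AEStronglyMeasurable (f t) μ) (hf_int : Integrable (fun z => σ z • f x z) μ)
    (hf'_meas : AEStronglyMeasurable (fun z => fderiv ℝ (f · z) x) μ)
    (hf : ∀ z, Differentiable ℝ (f · z)) {B : Ω → ℝ} (hB : Integrable B μ)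
    (hf'B : ∀ t ∈ s, ∀ z, ‖fderiv ℝ (f · z) t‖ * σ z ≤ B z) :
    HasFDerivAt (fun t => ∫ z, σ z • f t z ∂μ) (∫ z, σ z • fderiv ℝ (f · z) x ∂μ) x :=
  hasFDerivAt_integral_of_dominated_of_fderiv_le hs
    (Eventually.of_forall fun t => hσ.smul (hf_meas t)) hf_int (hσ.smul hf'_meas)
    (ae_of_all _ fun z t ht => by
      rw [norm_smul, Real.norm_of_nonneg (hσ0 z), mul_comm]
      exact hf'B t ht z)
    hB (ae_of_all _ fun z t _ => (hf z t).hasFDerivAt.const_smul (σ z))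

theorem fderiv_integral_smul_apply_of_dominated (hσ : AEStronglyMeasurable σ μ)
    (hσ0 : ∀ z, 0 ≤ σ z) {f : E → Ω → G} {x : E} {s : Set E} (hs : s ∈ 𝓝 x)
    (hf_meas : ∀ t, AEStronglyMeasurable (f t) μ) (hf_int : Integrable (fun z => σ z • f x z) μ)
    (hf'_meas : AEStronglyMeasurable (fun z => fderiv ℝ (f · z) x) μ)
    (hf : ∀ z, Differentiable ℝ (f · z)) {B : Ω → ℝ} (hB : Integrable B μ)
    (hf'B : ∀ t ∈ s, ∀ z, ‖fderiv ℝ (f · z) t‖ * σ z ≤ B z) (v : E) :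
    fderiv ℝ (fun t => ∫ z, σ z • f t z ∂μ) x v = ∫ z, σ z • fderiv ℝ (f · z) x v ∂μ := by
  rw [(hasFDerivAt_integral_smul_of_dominated hσ hσ0 hs hf_meas hf_int hf'_meas hf hB hf'B).fderiv,
    ContinuousLinearMap.integral_apply
      (integrable_smul_of_norm_mul_le hσ hσ0 hf'_meas hB (hf'B x (mem_of_mem_nhds hs)))]
  rfl

/- Reached through the directional derivatives `t ↦ ∂ᵥ f(t, z)`: `Integrable` does not elaborate
for `E →L[ℝ] E →L[ℝ] G`-valued functions (no `ContinuousENorm` instance is found). -/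
theorem fderiv_fderiv_integral_smul_apply_of_dominated [FiniteDimensional ℝ E]
    (hσ : AEStronglyMeasurable σ μ) (hσ0 : ∀ z, 0 ≤ σ z) {f : E → Ω → G} {x : E} {s : Set E}
    (hs : IsOpen s) (hx : x ∈ s) (hf : ∀ z, ContDiff ℝ 2 (f · z))
    (hf_meas : ∀ t, AEStronglyMeasurable (f t) μ)
    (hf'_meas : ∀ t, AEStronglyMeasurable (fun z => fderiv ℝ (f · z) t) μ)
    (hf_int : ∀ t ∈ s, Integrable (fun z => σ z • f t z) μ) {B₁ B₂ : Ω → ℝ}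
    (hB₁ : Integrable B₁ μ) (hB₂ : Integrable B₂ μ)
    (hf'B : ∀ t ∈ s, ∀ z, ‖fderiv ℝ (f · z) t‖ * σ z ≤ B₁ z)
    (hf''B : ∀ t ∈ s, ∀ z, ‖iteratedFDeriv ℝ 2 (f · z) t‖ * σ z ≤ B₂ z) (v w : E) :
    fderiv ℝ (fun t => fderiv ℝ (fun t => ∫ z, σ z • f t z ∂μ) t v) x w =
      ∫ z, σ z • fderiv ℝ (fderiv ℝ (f · z)) x w v ∂μ := by
  have hD : (fun t => fderiv ℝ (fun t => ∫ z, σ z • f t z ∂μ) t v) =ᶠ[𝓝 x]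
      fun t => ∫ z, σ z • fderiv ℝ (f · z) t v ∂μ :=
    Filter.mem_of_superset (hs.mem_nhds hx) fun t ht =>
      fderiv_integral_smul_apply_of_dominated hσ hσ0 (hs.mem_nhds ht) hf_meas (hf_int t ht)
        (hf'_meas t) (fun z => (hf z).differentiable two_ne_zero) hB₁ hf'B v
  have hfv : ∀ z t, HasFDerivAt (fun t => fderiv ℝ (f · z) t v)
      ((ContinuousLinearMap.apply ℝ G v).comp (fderiv ℝ (fderiv ℝ (f · z)) t)) t :=
    fun z t => (ContinuousLinearMap.apply ℝ G v).hasFDerivAt.comp t ((hf z).hasFDerivAt_fderiv t)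
  have hfv_meas : ∀ t, AEStronglyMeasurable (fun z => fderiv ℝ (f · z) t v) μ := fun t =>
    (ContinuousLinearMap.apply ℝ G v).continuous.comp_aestronglyMeasurable (hf'_meas t)
  have hfv_int : Integrable (fun z => σ z • fderiv ℝ (f · z) x v) μ :=
    (integrable_smul_of_norm_mul_le hσ hσ0 (hf'_meas x) hB₁ (hf'B x hx)).apply_continuousLinearMap v
  have hfv'B : ∀ t ∈ s, ∀ z,
      ‖fderiv ℝ (fun t => fderiv ℝ (f · z) t v) t‖ * σ z ≤ ‖v‖ * B₂ z := by
    intro t ht z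
    have hA : ∀ A : E →L[ℝ] E →L[ℝ] G, ‖(ContinuousLinearMap.apply ℝ G v).comp A‖ ≤ ‖v‖ * ‖A‖ :=
      fun A => ContinuousLinearMap.opNorm_le_bound _ (by positivity) fun w => by
        simpa [mul_comm ‖v‖, mul_right_comm _ ‖w‖] using A.le_opNorm₂ w v
    rw [(hfv z t).fderiv]
    calc _ ≤ ‖v‖ * ‖fderiv ℝ (fderiv ℝ (f · z)) t‖ * σ z :=
          mul_le_mul_of_nonneg_right (hA _) (hσ0 z)
      _ = ‖v‖ * (‖iteratedFDeriv ℝ 2 (f · z) t‖ * σ z) := by rw [norm_fderiv_fderiv, mul_assoc]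
      _ ≤ ‖v‖ * B₂ z := mul_le_mul_of_nonneg_left (hf''B t ht z) (norm_nonneg v)
  rw [hD.fderiv_eq, fderiv_integral_smul_apply_of_dominated hσ hσ0 (hs.mem_nhds hx) hfv_meas
    hfv_int (aestronglyMeasurable_fderiv hfv_meas fun z => (hfv z x).differentiableAt)
    (fun z t => (hfv z t).differentiableAt) (hB₂.const_mul ‖v‖) hfv'B w]
  simp only [fun z => (hfv z x).fderiv]
  rfl

end ParametricIntegral

noncomputable def e2 : Fin 2 → ℝ × ℝ := ![(1, 0), (0, 1)]

theorem second_variation_energy_varying_target_general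
    {Ω : Type*} [MeasurableSpace Ω] (μ : Measure Ω)
    (σ : Ω → ℝ) (hσmeas : Measurable σ) (hσpos : ∀ z, 0 < σ z) (g : ℝ)
    (H L : ℝ × ℝ → Ω → ℝ) (φ : ℝ × ℝ → Ω → ℂ)
    (hHdiff : ∀ z, ContDiff ℝ 2 (fun t => H t z))
    (hLdiff : ∀ z, ContDiff ℝ 2 (fun t => L t z))
    (hφdiff : ∀ z, ContDiff ℝ 2 (fun t => φ t z))
    (heq : ∀ t z, H t z * L t z = (‖φ t z‖) ^ 2 / (σ z) ^ 2)
    (hLnonneg : ∀ t z, 0 ≤ L t z)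
    (hφ0 : ∀ z, φ 0 z = 0) (hH0 : ∀ z, H 0 z = 1)
    -- measurability in `z` of the densities and their variations
    (hHmeas : ∀ t, AEStronglyMeasurable (fun z => H t z) μ)
    (hLmeas : ∀ t, AEStronglyMeasurable (fun z => L t z) μ)
    (hL1meas : ∀ t, AEStronglyMeasurable (fun z => fderiv ℝ (fun s => L s z) t) μ)
    -- uniform domination of the integrands and their `t`-derivatives near `t = 0`
    (ε : ℝ) (hε : 0 < ε) (B₀ B₁ B₂ : Ω → ℝ)
    (hB₀ : Integrable B₀ μ) (hB₁ : Integrable B₁ μ) (hB₂ : Integrable B₂ μ)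
    (hdom₀ : ∀ t z, ‖t‖ < ε → (|H t z| + |L t z|) * σ z ≤ B₀ z)
    (hdom₁ : ∀ t z, ‖t‖ < ε →
      (‖fderiv ℝ (fun s => H s z) t‖ + ‖fderiv ℝ (fun s => L s z) t‖) * σ z ≤ B₁ z)
    (hdom₂ : ∀ t z, ‖t‖ < ε →
      (‖iteratedFDeriv ℝ 2 (fun s => H s z) t‖ +
        ‖iteratedFDeriv ℝ 2 (fun s => L s z) t‖) * σ z ≤ B₂ z)
    -- the Jacobian integral is the constant `g` near `t = 0`
    (hJ : ∀ t, ‖t‖ < ε → (∫ z, (H t z - L t z) * σ z ∂μ) = g)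
    -- the energy functional
    (E : ℝ × ℝ → ℝ) (hE : E = fun t => ∫ z, (H t z + L t z) * σ z ∂μ) :
    (∀ t, ‖t‖ < ε → E t = g + 2 * ∫ z, L t z * σ z ∂μ) ∧
    (∀ t, ‖t‖ < ε → g ≤ E t) ∧
    E 0 = g ∧
    (∀ i : Fin 2, fderiv ℝ E 0 (e2 i) = 0) ∧
    (∀ i j : Fin 2,
      fderiv ℝ (fun t => fderiv ℝ E t (e2 i)) 0 (e2 j) =
        4 * ∫ z, ((fderiv ℝ (fun s => φ s z) 0 (e2 i)) *
            (starRingEnd ℂ) (fderiv ℝ (fun s => φ s z) 0 (e2 j))).re / σ z ∂μ) := by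
  have hσ0 : ∀ z, 0 ≤ σ z := fun z => (hσpos z).le
  have hσm : AEStronglyMeasurable σ μ := hσmeas.aestronglyMeasurable
  have hU : IsOpen {t : ℝ × ℝ | ‖t‖ < ε} := isOpen_lt continuous_norm continuous_const
  have h0U : (0 : ℝ × ℝ) ∈ {t : ℝ × ℝ | ‖t‖ < ε} := by simpa using hε
  have hσH : ∀ t, ‖t‖ < ε → Integrable (fun z => σ z • H t z) μ := fun t ht =>
    integrable_smul_of_norm_mul_le hσm hσ0 (hHmeas t) hB₀ fun z =>
      mul_le_of_add_mul_le (abs_nonneg _) (hσ0 z) (add_comm |H t z| _ ▸ hdom₀ t z ht)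
  have hσL : ∀ t, ‖t‖ < ε → Integrable (fun z => σ z • L t z) μ := fun t ht =>
    integrable_smul_of_norm_mul_le hσm hσ0 (hLmeas t) hB₀ fun z =>
      mul_le_of_add_mul_le (abs_nonneg _) (hσ0 z) (hdom₀ t z ht)
  have hEL : ∀ t, ‖t‖ < ε → E t = g + 2 * ∫ z, L t z * σ z ∂μ := fun t ht =>
    hE ▸ integral_add_mul_eq_add_two_mul (by simpa only [smul_eq_mul, mul_comm] using hσH t ht)
      (by simpa only [smul_eq_mul, mul_comm] using hσL t ht) (hJ t ht)
  have hL0 : ∀ z, L 0 z = 0 := fun z => by simpa [hφ0 z, hH0 z] using heq 0 z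
  have hE0 : E 0 = g := by simpa [hL0] using hEL 0 h0U
  have hEg : ∀ t, ‖t‖ < ε → g ≤ E t := fun t ht => (hEL t ht).symm ▸ le_add_of_nonneg_right
    (mul_nonneg zero_le_two (integral_nonneg fun z => mul_nonneg (hLnonneg t z) (hσ0 z)))
  have hmin : IsLocalMin E 0 := Filter.mem_of_superset (hU.mem_nhds h0U) fun t ht => hE0 ▸ hEg t ht
  refine ⟨hEL, hEg, hE0, fun i => by rw [hmin.fderiv_eq_zero]; rfl, fun i j => ?_⟩
  have hEL' : E =ᶠ[𝓝 0] fun t => g + (2 : ℝ) • ∫ z, σ z • L t z ∂μ :=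
    Filter.mem_of_superset (hU.mem_nhds h0U) fun t ht => (hEL t ht).trans <| by
      simp only [smul_eq_mul, mul_comm (σ _)]
  rw [fderiv_fderiv_apply_of_eventuallyEq_const_add_smul hEL',
    fderiv_fderiv_integral_smul_apply_of_dominated hσm hσ0 hU h0U hLdiff hLmeas hL1meas hσL hB₁ hB₂
      (fun t ht z => mul_le_of_add_mul_le (norm_nonneg _) (hσ0 z) (hdom₁ t z ht))
      (fun t ht z => mul_le_of_add_mul_le (norm_nonneg _) (hσ0 z) (hdom₂ t z ht)),
    smul_eq_mul, ← integral_const_mul, ← integral_const_mul]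
  refine integral_congr_ae (ae_of_all _ fun z => ?_)
  simp only [smul_eq_mul]
  rw [fderiv_fderiv_apply_of_mul_eq_sq_norm_div (hHdiff z) (hLdiff z) (hφdiff z) (heq · z)
    (hLnonneg · z) (hφ0 z) (hH0 z)]
  field_simp [(hσpos z).ne']
  ring

/-- Analytic content of Theorem 1.2 (varying the target): for a two-parameter family of
densities `H, L` with `H·L = |φ|²/σ²`, `φ(0,·) = 0`, `H(0,·) = 1`, `L ≥ 0`,
with integrands dominated (uniformly near `t = 0`) by integrable functions so that
differentiation under the integral sign is valid, and with constant Jacobian integral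
`∫ (H − L)σ = g`, the energy `E(t) = ∫ (H + L)σ` satisfies `E(t) = g + 2∫Lσ ≥ g = E(0)`,
has a critical point at `t = 0`, and its second variation there is
`4 ∫ Re(∂ᵢφ · conj(∂ⱼφ))/σ`, i.e. the `L²`-Bergman pairing (up to a constant). -/
theorem second_variation_energy_varying_target
    {Ω : Type*} [MeasurableSpace Ω] (μ : Measure Ω)
    (σ : Ω → ℝ) (hσmeas : Measurable σ) (hσpos : ∀ z, 0 < σ z) (g : ℝ)
    (H L : ℝ × ℝ → Ω → ℝ) (φ : ℝ × ℝ → Ω → ℂ)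
    (hHdiff : ∀ z, ContDiff ℝ 2 (fun t => H t z))
    (hLdiff : ∀ z, ContDiff ℝ 2 (fun t => L t z))
    (hφdiff : ∀ z, ContDiff ℝ 2 (fun t => φ t z))
    (heq : ∀ t z, H t z * L t z = (‖φ t z‖) ^ 2 / (σ z) ^ 2)
    (hLnonneg : ∀ t z, 0 ≤ L t z)
    (hφ0 : ∀ z, φ 0 z = 0) (hH0 : ∀ z, H 0 z = 1)
    -- measurability in `z` of the densities and their variations
    (hHmeas : ∀ t, AEStronglyMeasurable (fun z => H t z) μ)
    (hLmeas : ∀ t, AEStronglyMeasurable (fun z => L t z) μ)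
    (hH1meas : ∀ t, AEStronglyMeasurable (fun z => fderiv ℝ (fun s => H s z) t) μ)
    (hL1meas : ∀ t, AEStronglyMeasurable (fun z => fderiv ℝ (fun s => L s z) t) μ)
    (hφ1meas : ∀ t, AEStronglyMeasurable (fun z => fderiv ℝ (fun s => φ s z) t) μ)
    -- uniform domination of the integrands and their `t`-derivatives near `t = 0`
    (ε : ℝ) (hε : 0 < ε) (B₀ B₁ B₂ : Ω → ℝ)
    (hB₀ : Integrable B₀ μ) (hB₁ : Integrable B₁ μ) (hB₂ : Integrable B₂ μ)
    (hdom₀ : ∀ t z, ‖t‖ < ε → (|H t z| + |L t z|) * σ z ≤ B₀ z)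
    (hdom₁ : ∀ t z, ‖t‖ < ε →
      (‖fderiv ℝ (fun s => H s z) t‖ + ‖fderiv ℝ (fun s => L s z) t‖) * σ z ≤ B₁ z)
    (hdom₂ : ∀ t z, ‖t‖ < ε →
      (‖iteratedFDeriv ℝ 2 (fun s => H s z) t‖ +
        ‖iteratedFDeriv ℝ 2 (fun s => L s z) t‖) * σ z ≤ B₂ z)
    -- the Jacobian integral is the constant `g` near `t = 0`
    (hJ : ∀ t, ‖t‖ < ε → (∫ z, (H t z - L t z) * σ z ∂μ) = g)
    -- the energy functional
    (E : ℝ × ℝ → ℝ) (hE : E = fun t => ∫ z, (H t z + L t z) * σ z ∂μ) :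
    (∀ t, ‖t‖ < ε → E t = g + 2 * ∫ z, L t z * σ z ∂μ) ∧
    (∀ t, ‖t‖ < ε → g ≤ E t) ∧
    E 0 = g ∧
    (∀ i : Fin 2, fderiv ℝ E 0 (e2 i) = 0) ∧
    (∀ i j : Fin 2,
      fderiv ℝ (fun t => fderiv ℝ E t (e2 i)) 0 (e2 j) =
        4 * ∫ z, ((fderiv ℝ (fun s => φ s z) 0 (e2 i)) *
            (starRingEnd ℂ) (fderiv ℝ (fun s => φ s z) 0 (e2 j))).re / σ z ∂μ) :=
  second_variation_energy_varying_target_general μ σ hσmeas hσpos g H L φ hHdiff hLdiff hφdiff heq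
    hLnonneg hφ0 hH0 hHmeas hLmeas hL1meas ε hε B₀ B₁ B₂ hB₀ hB₁ hB₂ hdom₀ hdom₁ hdom₂ hJ E hE
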